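/- arXiv:2409.18621 — 5 statements merged into one kernel-verified Lean document; each statement's English description precedes it below -/
import Mathlib

section
/- Let f : Fin n → ℝ, α > 0, u ∈ ℝ, and X ~ Dir(α·ν₀). Then P(E_X[f] ≥ u) ≤ exp(−α·Kinf(ν₀, u, f)). -/
/-! Writing `X = G / ∑ⱼ Gⱼ`, the event `E_X[f] ≥ u` is a.s. the event `∑ᵢ Gᵢ (f i - u) ≥ 0`.
Exponential Markov together with the Gamma moment generating function bounds its probability by
`exp (-α ∑ᵢ ν₀ i log (1 - t (f i - u)))` for every admissible `t ≥ 0`. If `t` is a root of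
`∑ᵢ ν₀ i (f i - u) / (1 - t (f i - u))` (which exists by the intermediate value theorem when
`E_ν₀[f] < u < max f`), the tilted vector `μ i = ν₀ i / (1 - t (f i - u))` is a probability
vector with `E_μ[f] = u` and `KL(ν₀‖μ)` equal to that exponent. In the remaining cases either
`u ≤ E_ν₀[f]`, where `Kinf ≤ KL(ν₀‖ν₀) = 0`, or `f ≤ u` and `E_ν₀[f] < u`, where the event is
null.
-/

open MeasureTheory ProbabilityTheory

/-- The joint law of `n` independent Gamma random variables `Gᵢ` with shape `α·ν i`
and rate `1`: the Dirichlet random vector is `X = G / ∑ⱼ Gⱼ`. -/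
noncomputable def gammaPi {n : ℕ} (α : ℝ) (ν : Fin n → ℝ) : Measure (Fin n → ℝ) :=
  Measure.pi fun i => gammaMeasure (α * ν i) 1

noncomputable def dirNorm {n : ℕ} (g : Fin n → ℝ) : Fin n → ℝ :=
  fun i => g i / ∑ j, g j

def probVec {n : ℕ} (p : Fin n → ℝ) : Prop :=
  (∀ i, 0 ≤ p i) ∧ ∑ i, p i = 1

/-- `0 * Real.log _ = 0` implements the convention `0·log 0 = 0`. -/
noncomputable def klFin {n : ℕ} (p q : Fin n → ℝ) : EReal :=
  if ∀ i, q i = 0 → p i = 0 then ((∑ i, p i * Real.log (p i / q i) : ℝ) : EReal) else ⊤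

/-- The `EReal` infimum over an empty set is `⊤`, matching `inf ∅ = +∞`. -/
noncomputable def KinfFin {n : ℕ} (ν : Fin n → ℝ) (u : ℝ) (f : Fin n → ℝ) : EReal :=
  ⨅ μ ∈ {μ : Fin n → ℝ | probVec μ ∧ u ≤ ∑ i, μ i * f i}, klFin ν μ

open Finset

lemma lintegral_exp_mul_gammaMeasure {a r c : ℝ} (ha : 0 < a) (hr : 0 < r) (hcr : c < r) :
    ∫⁻ x, ENNReal.ofReal (Real.exp (c * x)) ∂gammaMeasure a r =
      ENNReal.ofReal ((r / (r - c)) ^ a) := by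
  have hrc : 0 < r - c := sub_pos.2 hcr
  have hdensity : ∀ x, gammaPDF a r x * ENNReal.ofReal (Real.exp (c * x)) =
      ENNReal.ofReal ((r / (r - c)) ^ a) * gammaPDF a (r - c) x := by
    intro x
    rcases le_or_gt 0 x with hx | hx
    · rw [gammaPDF_of_nonneg hx, gammaPDF_of_nonneg hx, ← ENNReal.ofReal_mul (by positivity),
        ← ENNReal.ofReal_mul (by positivity), Real.div_rpow hr.le hrc.le]
      congr 1
      have hexp : Real.exp (-(r * x)) * Real.exp (c * x) = Real.exp (-((r - c) * x)) := by
        rw [← Real.exp_add]; ring_nf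
      have : (r - c) ^ a ≠ 0 := (Real.rpow_pos_of_pos hrc a).ne'
      rw [mul_assoc, hexp]
      field_simp
    · simp [gammaPDF_of_neg hx]
  have hpdf : Measurable (gammaPDF a r) := (measurable_gammaPDFReal a r).ennreal_ofReal
  rw [gammaMeasure, lintegral_withDensity_eq_lintegral_mul _ hpdf (by fun_prop)]
  simp_rw [Pi.mul_apply, hdensity]
  rw [lintegral_const_mul' _ _ ENNReal.ofReal_ne_top, lintegral_gammaPDF_eq_one ha hrc, mul_one]

lemma lintegral_pi_prod_eq_prod {ι : Type*} [Fintype ι] {E : ι → Type*}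
    [∀ i, MeasurableSpace (E i)] (μ : ∀ i, Measure (E i)) [∀ i, IsProbabilityMeasure (μ i)]
    {F : ∀ i, E i → ENNReal} (hF : ∀ i, Measurable (F i)) :
    ∫⁻ x, ∏ i, F i (x i) ∂Measure.pi μ = ∏ i, ∫⁻ y, F i y ∂μ i := by
  rw [lintegral_prod_eq_prod_lintegral_of_indepFun _ _
    (iIndepFun_pi fun i => (hF i).aemeasurable) fun i => (hF i).comp (measurable_pi_apply i)]
  exact prod_congr rfl fun i _ => (measurePreserving_eval μ i).lintegral_comp (hF i)

lemma ae_pos_gammaMeasure (a r : ℝ) : ∀ᵐ x ∂gammaMeasure a r, 0 < x := by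
  simp only [ae_iff, not_lt]
  change gammaMeasure a r (Set.Iic 0) = 0
  rw [gammaMeasure, withDensity_apply _ measurableSet_Iic, setLIntegral_congr Iio_ae_eq_Iic.symm]
  exact lintegral_gammaPDF_of_nonpos le_rfl

section gammaPi

variable {n : ℕ} {α : ℝ} {ν : Fin n → ℝ}

lemma isProbabilityMeasure_gammaPi (hαν : ∀ i, 0 < α * ν i) :
    IsProbabilityMeasure (gammaPi α ν) := by
  have := fun i => isProbabilityMeasure_gammaMeasure (hαν i) one_pos
  unfold gammaPi
  infer_instance

lemma ae_pos_gammaPi (hαν : ∀ i, 0 < α * ν i) : ∀ᵐ g ∂gammaPi α ν, ∀ i, 0 < g i := by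
  have := fun i => isProbabilityMeasure_gammaMeasure (hαν i) one_pos
  rw [ae_all_iff]
  exact fun i => (measurePreserving_eval _ i).quasiMeasurePreserving.ae (ae_pos_gammaMeasure _ _)

lemma lintegral_exp_sum_mul_gammaPi (hαν : ∀ i, 0 < α * ν i) {c : Fin n → ℝ}
    (hc : ∀ i, c i < 1) :
    ∫⁻ g, ENNReal.ofReal (Real.exp (∑ i, c i * g i)) ∂gammaPi α ν =
      ENNReal.ofReal (Real.exp (-(α * ∑ i, ν i * Real.log (1 - c i)))) := by
  have := fun i => isProbabilityMeasure_gammaMeasure (hαν i) one_pos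
  have hfactor : ∀ i, ENNReal.ofReal ((1 / (1 - c i)) ^ (α * ν i)) =
      ENNReal.ofReal (Real.exp (-(α * (ν i * Real.log (1 - c i))))) := by
    intro i
    rw [Real.rpow_def_of_pos (one_div_pos.2 (sub_pos.2 (hc i))), one_div, Real.log_inv]
    ring_nf
  simp_rw [Real.exp_sum, ENNReal.ofReal_prod_of_nonneg fun i _ => (Real.exp_pos _).le]
  rw [gammaPi, lintegral_pi_prod_eq_prod _
      (F := fun i y => ENNReal.ofReal (Real.exp (c i * y))) fun i => by fun_prop,
    mul_sum, ← sum_neg_distrib, Real.exp_sum,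
    ENNReal.ofReal_prod_of_nonneg fun i _ => (Real.exp_pos _).le]
  exact prod_congr rfl fun i _ =>
    (lintegral_exp_mul_gammaMeasure (hαν i) one_pos (hc i)).trans (hfactor i)

lemma gammaPi_sum_mul_nonneg_le (hαν : ∀ i, 0 < α * ν i) {c : Fin n → ℝ} {t : ℝ} (ht : 0 ≤ t)
    (htc : ∀ i, t * c i < 1) :
    gammaPi α ν {g | 0 ≤ ∑ i, g i * c i} ≤
      ENNReal.ofReal (Real.exp (-(α * ∑ i, ν i * Real.log (1 - t * c i)))) := by
  have hevent : {g : Fin n → ℝ | 0 ≤ ∑ i, g i * c i} ⊆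
      {g | 1 ≤ ENNReal.ofReal (Real.exp (∑ i, t * c i * g i))} := by
    intro g hg
    have : 0 ≤ ∑ i, t * c i * g i := by
      simpa only [mul_assoc, ← mul_sum, mul_comm (g _)] using mul_nonneg ht hg
    exact ENNReal.one_le_ofReal.2 (Real.one_le_exp this)
  calc gammaPi α ν {g | 0 ≤ ∑ i, g i * c i}
      ≤ gammaPi α ν {g | 1 ≤ ENNReal.ofReal (Real.exp (∑ i, t * c i * g i))} :=
        measure_mono hevent
    _ ≤ ∫⁻ g, ENNReal.ofReal (Real.exp (∑ i, t * c i * g i)) ∂gammaPi α ν := by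
        simpa only [one_mul] using
          mul_meas_ge_le_lintegral₀ (Measurable.aemeasurable (by fun_prop)) 1
    _ = _ := lintegral_exp_sum_mul_gammaPi hαν htc

lemma gammaPi_sum_mul_nonneg_eq_zero (hαν : ∀ i, 0 < α * ν i) {c : Fin n → ℝ}
    (hc : ∀ i, c i ≤ 0) {j : Fin n} (hj : c j < 0) :
    gammaPi α ν {g | 0 ≤ ∑ i, g i * c i} = 0 := by
  rw [measure_eq_zero_iff_ae_notMem]
  filter_upwards [ae_pos_gammaPi hαν] with g hg
  simp only [not_le]
  calc ∑ i, g i * c i < ∑ _i : Fin n, (0 : ℝ) :=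
        sum_lt_sum (fun i _ => mul_nonpos_of_nonneg_of_nonpos (hg i).le (hc i))
          ⟨j, mem_univ j, mul_neg_of_pos_of_neg (hg j) hj⟩
    _ = 0 := sum_const_zero

lemma le_sum_dirNorm_mul_iff {g f : Fin n → ℝ} {u : ℝ} (hg : 0 < ∑ j, g j) :
    u ≤ ∑ i, dirNorm g i * f i ↔ 0 ≤ ∑ i, g i * (f i - u) := by
  have hdir : ∑ i, dirNorm g i * f i = (∑ i, g i * f i) / ∑ j, g j := by
    simp only [dirNorm, div_mul_eq_mul_div, sum_div]
  have hshift : ∑ i, g i * (f i - u) = ∑ i, g i * f i - u * ∑ j, g j := by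
    simp only [mul_sub, sum_sub_distrib, ← sum_mul, mul_comm u]
  rw [hdir, hshift, le_div_iff₀ hg, sub_nonneg]

lemma gammaPi_dirNorm_event_eq [Nonempty (Fin n)] (hαν : ∀ i, 0 < α * ν i) (f : Fin n → ℝ)
    (u : ℝ) :
    gammaPi α ν {g | u ≤ ∑ i, dirNorm g i * f i} = gammaPi α ν {g | 0 ≤ ∑ i, g i * (f i - u)} := by
  refine measure_congr (Filter.eventuallyEq_set.2 ?_)
  filter_upwards [ae_pos_gammaPi hαν] with g hg
  exact le_sum_dirNorm_mul_iff (sum_pos (fun i _ => hg i) univ_nonempty)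

end gammaPi

lemma div_one_sub_mul_eq (a : ℝ) {c t : ℝ} (h : 1 - t * c ≠ 0) :
    a / (1 - t * c) = a + t * (a * c / (1 - t * c)) := by
  rw [div_eq_iff h, add_mul, mul_assoc t, div_mul_cancel₀ _ h]
  ring

section Kinf

variable {n : ℕ}

lemma klFin_self (p : Fin n → ℝ) : klFin p p = 0 := by
  simp [klFin, Real.log_div_self]

lemma KinfFin_le_klFin {ν μ f : Fin n → ℝ} {u : ℝ} (hμ : probVec μ) (hu : u ≤ ∑ i, μ i * f i) :
    KinfFin ν u f ≤ klFin ν μ :=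
  iInf₂_le μ ⟨hμ, hu⟩

lemma KinfFin_le_of_tilt {ν f : Fin n → ℝ} {u t : ℝ} (hν : probVec ν)
    (htc : ∀ i, t * (f i - u) < 1)
    (hroot : ∑ i, ν i * (f i - u) / (1 - t * (f i - u)) = 0) :
    KinfFin ν u f ≤ ((∑ i, ν i * Real.log (1 - t * (f i - u)) : ℝ) : EReal) := by
  set d : Fin n → ℝ := fun i => 1 - t * (f i - u)
  have hd : ∀ i, 0 < d i := fun i => sub_pos.2 (htc i)
  set μ : Fin n → ℝ := fun i => ν i / d i
  have hμ_split : ∀ i, μ i = ν i + t * (ν i * (f i - u) / d i) := fun i =>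
    div_one_sub_mul_eq _ (hd i).ne'
  have hμ_sum : ∑ i, μ i = 1 := by
    rw [sum_congr rfl fun i _ => hμ_split i, sum_add_distrib, ← mul_sum, hroot, hν.2]
    ring
  have hμ_mean : ∑ i, μ i * f i = u := by
    have : ∑ i, μ i * (f i - u) = 0 := by
      rw [← hroot]
      exact sum_congr rfl fun i _ => by simp only [μ, d]; ring
    simpa only [mul_sub, sum_sub_distrib, ← sum_mul, hμ_sum, one_mul, sub_eq_zero] using this
  have hμ : probVec μ := ⟨fun i => div_nonneg (hν.1 i) (hd i).le, hμ_sum⟩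
  have hkl : klFin ν μ = ((∑ i, ν i * Real.log (d i) : ℝ) : EReal) := by
    rw [klFin, if_pos fun i hi => by simpa [μ, (hd i).ne'] using hi]
    congr 2 with i
    rcases eq_or_ne (ν i) 0 with h | h
    · simp [h]
    · rw [div_div_cancel₀ h]
  exact (KinfFin_le_klFin hμ hμ_mean.ge).trans_eq hkl

end Kinf

lemma exists_tilt_root {n : ℕ} {ν c : Fin n → ℝ} (hν : ∀ i, 0 < ν i)
    (hneg : ∑ i, ν i * c i < 0) {j : Fin n} (hj : 0 < c j) :
    ∃ t, 0 ≤ t ∧ (∀ i, t * c i < 1) ∧ ∑ i, ν i * c i / (1 - t * c i) = 0 := by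
  obtain ⟨m, -, hm⟩ := exists_max_image univ c ⟨j, mem_univ j⟩
  set B := c m
  set D := -∑ i, ν i * c i
  have hB : 0 < B := hj.trans_le (hm j (mem_univ j))
  have hD : 0 < D := neg_pos.2 hneg
  have hνm := hν m
  -- `t₁` solves `t * (ν m * B * B / (1 - t * B)) = D`, which forces `0 ≤ φ t₁` below.
  set t₁ := D / (B * (ν m * B + D))
  have ht₁ : 0 ≤ t₁ := by positivity
  have ht₁B : t₁ * B = D / (ν m * B + D) := by
    simp only [t₁]; field_simp
  have hbelow : ∀ t ∈ Set.Icc 0 t₁, ∀ i, t * c i < 1 := by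
    rintro t ⟨ht0, htt₁⟩ i
    calc t * c i ≤ t * B := mul_le_mul_of_nonneg_left (hm i (mem_univ i)) ht0
      _ ≤ t₁ * B := mul_le_mul_of_nonneg_right htt₁ hB.le
      _ < 1 := by rw [ht₁B, div_lt_one (by positivity)]; linarith [mul_pos hνm hB]
  set φ := fun t => ∑ i, ν i * c i / (1 - t * c i)
  have hφ_cont : ContinuousOn φ (Set.Icc 0 t₁) :=
    continuousOn_finsetSum _ fun i _ => continuousOn_const.div (by fun_prop)
      fun t ht => (sub_pos.2 (hbelow t ht i)).ne'
  have hφ0 : φ 0 ≤ 0 := by simpa [φ] using hneg.le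
  have hφt₁ : 0 ≤ φ t₁ := by
    have hterm : ν m * B * B / (1 - t₁ * B) ≤ ∑ i, ν i * c i * c i / (1 - t₁ * c i) :=
      single_le_sum (f := fun i => ν i * c i * c i / (1 - t₁ * c i))
        (fun i _ => div_nonneg (by rw [mul_assoc]; exact mul_nonneg (hν i).le (mul_self_nonneg _))
          (sub_pos.2 (hbelow t₁ ⟨ht₁, le_rfl⟩ i)).le) (mem_univ m)
    have hD_eq : t₁ * (ν m * B * B / (1 - t₁ * B)) = D := by
      have : 1 - t₁ * B = ν m * B / (ν m * B + D) := by
        rw [ht₁B]; field_simp; ring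
      rw [this]; simp only [t₁]; field_simp
    have hφ_split : φ t₁ = -D + t₁ * ∑ i, ν i * c i * c i / (1 - t₁ * c i) := by
      simp only [φ, D, neg_neg, mul_sum, ← sum_add_distrib]
      exact sum_congr rfl fun i _ =>
        div_one_sub_mul_eq _ (sub_pos.2 (hbelow t₁ ⟨ht₁, le_rfl⟩ i)).ne'
    rw [hφ_split, ← hD_eq]
    linarith [mul_le_mul_of_nonneg_left hterm ht₁]
  obtain ⟨t, ht, hroot⟩ := intermediate_value_Icc ht₁ hφ_cont ⟨hφ0, hφt₁⟩
  exact ⟨t, ht.1, hbelow t ht, hroot⟩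

lemma EReal.exp_neg_mul_le_exp_neg_mul {a : ℝ} (ha : 0 ≤ a) {x y : EReal} (h : x ≤ y) :
    EReal.exp (-(a * y)) ≤ EReal.exp (-(a * x)) :=
  EReal.exp_monotone (EReal.neg_le_neg_iff.2 (mul_le_mul_of_nonneg_left h (by exact_mod_cast ha)))

theorem stmt4_general {n : ℕ} (ν₀ : Fin n → ℝ) (hpos : ∀ i, 0 < ν₀ i)
    (hsum : ∑ i, ν₀ i = 1) (f : Fin n → ℝ) (α : ℝ) (hα : 0 < α) (u : ℝ) :
    gammaPi α ν₀ {g | u ≤ ∑ i, dirNorm g i * f i} ≤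
      EReal.exp (-((α : EReal) * KinfFin ν₀ u f)) := by
  have hν : probVec ν₀ := ⟨fun i => (hpos i).le, hsum⟩
  have hαν : ∀ i, 0 < α * ν₀ i := fun i => mul_pos hα (hpos i)
  have : Nonempty (Fin n) := univ_nonempty_iff.1 (nonempty_of_sum_ne_zero (hsum ▸ one_ne_zero))
  have := isProbabilityMeasure_gammaPi hαν
  rcases le_or_gt u (∑ i, ν₀ i * f i) with hmean | hmean
  · calc _ ≤ 1 := prob_le_one
      _ = EReal.exp (-((α : EReal) * 0)) := by simp
      _ ≤ _ := EReal.exp_neg_mul_le_exp_neg_mul hα.le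
          ((KinfFin_le_klFin hν hmean).trans_eq (klFin_self ν₀))
  rw [gammaPi_dirNorm_event_eq hαν]
  by_cases hmax : ∃ j, u < f j
  · obtain ⟨j, hj⟩ := hmax
    have hneg : ∑ i, ν₀ i * (f i - u) < 0 := by
      simpa only [mul_sub, sum_sub_distrib, ← sum_mul, hsum, one_mul, sub_neg] using hmean
    obtain ⟨t, ht, htc, hroot⟩ := exists_tilt_root hpos hneg (sub_pos.2 hj)
    calc _ ≤ _ := gammaPi_sum_mul_nonneg_le hαν ht htc
      _ = EReal.exp (-((α : EReal) *
            ((∑ i, ν₀ i * Real.log (1 - t * (f i - u)) : ℝ) : EReal))) := by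
          rw [← EReal.coe_mul, ← EReal.coe_neg, EReal.exp_coe]
      _ ≤ _ := EReal.exp_neg_mul_le_exp_neg_mul hα.le (KinfFin_le_of_tilt hν htc hroot)
  · simp only [not_exists, not_lt] at hmax
    obtain ⟨j, -, hj⟩ : ∃ j ∈ univ, ν₀ j * f j < ν₀ j * u :=
      exists_lt_of_sum_lt (by rwa [← sum_mul, hsum, one_mul])
    rw [gammaPi_sum_mul_nonneg_eq_zero hαν (fun i => sub_nonpos.2 (hmax i))
      (sub_neg.2 (lt_of_mul_lt_mul_left hj (hpos j).le))]
    exact zero_le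

/-- Let `f : Fin n → ℝ`, `α > 0`, `u ∈ ℝ`, and `X ~ Dir(α·ν₀)`. Then
`P(E_X[f] ≥ u) ≤ exp(−α·Kinf(ν₀, u, f))` (with `exp(−∞) = 0`, via `EReal.exp`). -/
theorem stmt4 {n : ℕ} (hn : 1 ≤ n) (ν₀ : Fin n → ℝ) (hpos : ∀ i, 0 < ν₀ i)
    (hsum : ∑ i, ν₀ i = 1) (f : Fin n → ℝ) (α : ℝ) (hα : 0 < α) (u : ℝ) :
    gammaPi α ν₀ {g | u ≤ ∑ i, dirNorm g i * f i} ≤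
      EReal.exp (-((α : EReal) * KinfFin ν₀ u f)) :=
  stmt4_general ν₀ hpos hsum f α hα u
end

section
/- Let s, t, j > 0 and x ∈ [0,1], and define h(z) = (s·x + z)·s/(s + z) + (t·x + j − z)·t/(t + j − z) for z ∈ [0, j]. Then the maximum of h over [0, j] is attained at z = j·s/(s + t), and h(j·s/(s+t)) = (s + t)·((s + t)·x + j)/(s + t + j). -/
/-!
Writing `s·x + z = (s + z) - s(1 - x)` and `t·x + j - z = (t + j - z) - t(1 - x)` turns `h` into
`h(z) = s + t - (1 - x)·(s²/(s + z) + t²/(t + j - z))`. Since `1 - x ≥ 0`, maximising `h` means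
minimising `s²/a + t²/b` under `a + b = s + t + j`, and by Titu's lemma this sum is at least
`(s + t)²/(s + t + j)`, with equality when `a : b = s : t`, i.e. at `z = j·s/(s + t)`.
-/

lemma sq_add_div_add_le_sq_div_add_sq_div {s t a b : ℝ} (ha : 0 < a) (hb : 0 < b) :
    (s + t) ^ 2 / (a + b) ≤ s ^ 2 / a + t ^ 2 / b := by
  simpa [Fin.sum_univ_two] using
    Finset.sq_sum_div_le_sum_sq_div Finset.univ ![s, t] (g := ![a, b])
      (by simp [Fin.forall_fin_two, ha, hb])

lemma weighted_sum_eq_sub_sq_div {s t j x z : ℝ} (ha : s + z ≠ 0) (hb : t + j - z ≠ 0) :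
    (s * x + z) * s / (s + z) + (t * x + j - z) * t / (t + j - z) =
      s + t - (1 - x) * (s ^ 2 / (s + z) + t ^ 2 / (t + j - z)) := by
  field_simp
  ring

lemma sq_div_add_sq_div_at_proportional_split {s t j : ℝ} (hs : 0 < s) (ht : 0 < t)
    (hj : 0 ≤ j) :
    s ^ 2 / (s + j * s / (s + t)) + t ^ 2 / (t + j - j * s / (s + t)) =
      (s + t) ^ 2 / (s + t + j) := by
  have hst : 0 < s + t := by linarith
  have ha : s + j * s / (s + t) = s * (s + t + j) / (s + t) := by field_simp
  have hb : t + j - j * s / (s + t) = t * (s + t + j) / (s + t) := by field_simp; ring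
  rw [ha, hb]
  field_simp

/-- Let `s, t, j > 0` and `x ∈ [0,1]`, and define
`h(z) = (s·x + z)·s/(s + z) + (t·x + j − z)·t/(t + j − z)` for `z ∈ [0, j]`.
Then the maximum of `h` over `[0, j]` is attained at `z = j·s/(s + t)`, and
`h(j·s/(s+t)) = (s + t)·((s + t)·x + j)/(s + t + j)`. -/
theorem stmt9 (s t j x : ℝ) (hs : 0 < s) (ht : 0 < t) (hj : 0 < j)
    (hx : x ∈ Set.Icc (0 : ℝ) 1) :
    j * s / (s + t) ∈ Set.Icc (0 : ℝ) j ∧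
    IsMaxOn (fun z => (s * x + z) * s / (s + z) + (t * x + j - z) * t / (t + j - z))
      (Set.Icc (0 : ℝ) j) (j * s / (s + t)) ∧
    (s * x + j * s / (s + t)) * s / (s + j * s / (s + t)) +
        (t * x + j - j * s / (s + t)) * t / (t + j - j * s / (s + t)) =
      (s + t) * ((s + t) * x + j) / (s + t + j) := by
  have hst : 0 < s + t := by linarith
  have hz₀ : j * s / (s + t) ∈ Set.Icc (0 : ℝ) j :=
    ⟨by positivity, div_le_of_le_mul₀ hst.le hj.le (by nlinarith)⟩
  have hpos : ∀ z ∈ Set.Icc (0 : ℝ) j, 0 < s + z ∧ 0 < t + j - z :=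
    fun z hz => ⟨by linarith [hz.1], by linarith [hz.2]⟩
  have hval := sq_div_add_sq_div_at_proportional_split hs ht hj.le
  obtain ⟨ha₀, hb₀⟩ := hpos _ hz₀
  refine ⟨hz₀, isMaxOn_iff.2 fun z hz => ?_, ?_⟩
  · obtain ⟨ha, hb⟩ := hpos z hz
    rw [weighted_sum_eq_sub_sq_div ha.ne' hb.ne', weighted_sum_eq_sub_sq_div ha₀.ne' hb₀.ne', hval]
    have hsum : s + z + (t + j - z) = s + t + j := by ring
    have htitu := hsum ▸ sq_add_div_add_le_sq_div_add_sq_div (s := s) (t := t) ha hb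
    exact sub_le_sub_left (mul_le_mul_of_nonneg_left htitu (by linarith [hx.2])) _
  · rw [weighted_sum_eq_sub_sq_div ha₀.ne' hb₀.ne', hval]
    field_simp
    ring
end

section
/- For all s, t, j > 0, x ∈ [0,1] and z ∈ [0, j]: s·(s·x + z)/(s + z) + t·(t·x + j − z)/(t + j − z) ≤ (s + t)·((s + t)·x + j)/(s + t + j). -/
/-- For all `s, t, j > 0`, `x ∈ [0,1]` and `z ∈ [0, j]`:
`s·(s·x + z)/(s + z) + t·(t·x + j − z)/(t + j − z) ≤ (s + t)·((s + t)·x + j)/(s + t + j)`. -/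
theorem stmt10 (s t j x z : ℝ) (hs : 0 < s) (ht : 0 < t) (hj : 0 < j)
    (hx : x ∈ Set.Icc (0 : ℝ) 1) (hz : z ∈ Set.Icc (0 : ℝ) j) :
    s * (s * x + z) / (s + z) + t * (t * x + j - z) / (t + j - z) ≤
      (s + t) * ((s + t) * x + j) / (s + t + j) := by
  obtain ⟨hx0, hx1⟩ := hx
  obtain ⟨hz0, hzj⟩ := hz
  have hA : 0 < s + z := by linarith
  have hB : 0 < t + j - z := by linarith
  have hC : 0 < s + t + j := by linarith
  rw [div_add_div _ _ (ne_of_gt hA) (ne_of_gt hB), div_le_div_iff₀ (by positivity) hC]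
  nlinarith [sq_nonneg (s * (j - z) - t * z), mul_nonneg (mul_nonneg (sub_nonneg.2 hx1) hz0) (sub_nonneg.2 hzj), sq_nonneg (s*(j-z)-t*z), mul_nonneg (sub_nonneg.2 hx1) (sq_nonneg (s*(j-z)-t*z)), mul_pos hs ht, mul_pos hA hB]
end

section
/- Let a, b > 0, m = a/(a+b), and λ > 0. Then the supremum over s ∈ [m, 1) of (λ·(s − m) − (a+b)·kl(m, s)) is attained at s* = (λ − (a+b) + √((λ − (a+b))² + 4λa))/(2λ), which lies in [m, 1). -/
open MeasureTheory
open scoped ENNReal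

/-- The Beta distribution with parameters `a, b > 0`: the probability measure on `[0,1] ⊆ ℝ`
with density `x^(a−1)·(1−x)^(b−1)/B(a,b)`, where `B(a,b) = Γ(a)·Γ(b)/Γ(a+b)`. -/
noncomputable def betaMeasure (a b : ℝ) : Measure ℝ :=
  (volume.restrict (Set.Icc (0 : ℝ) 1)).withDensity fun x =>
    ENNReal.ofReal
      (x ^ (a - 1) * (1 - x) ^ (b - 1) / (Real.Gamma a * Real.Gamma b / Real.Gamma (a + b)))

/-- For `p, q ∈ (0,1)`, `kl(p, q) = p·log(p/q) + (1−p)·log((1−p)/(1−q))`;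
note that `kl(p, p) = 0` holds automatically. -/
noncomputable def klBer (p q : ℝ) : ℝ :=
  p * Real.log (p / q) + (1 - p) * Real.log ((1 - p) / (1 - q))

/-!
Writing `m = a/(a+b)`, one has `(a+b)·kl(m, s) = ℓ(m) - ℓ(s)` for the log-likelihood
`ℓ(s) = a log s + b log(1 - s)`, so the objective is `λ s + ℓ(s)` up to a constant. This is
concave on `(0,1)`, and its critical point solves `λ s² = (λ - (a+b)) s + a`, whose larger root
is `s*`. Maximality follows from the tangent-line bound `log x ≤ x - 1`, and `m ≤ s* < 1` from
the signs of the quadratic at `m` and at `1`.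
-/

open Real

noncomputable def quadRoot (A B C : ℝ) : ℝ := (B + √(B ^ 2 + 4 * A * C)) / (2 * A)

lemma quadRoot_sq {A B C : ℝ} (hA : 0 < A) (hD : 0 ≤ B ^ 2 + 4 * A * C) :
    A * quadRoot A B C ^ 2 = B * quadRoot A B C + C := by
  have hsq := sq_sqrt hD
  unfold quadRoot
  generalize √(B ^ 2 + 4 * A * C) = r at hsq ⊢
  field_simp
  linear_combination hsq

lemma le_quadRoot {A B C x : ℝ} (hA : 0 < A) (hx : A * x ^ 2 - B * x - C ≤ 0) :
    x ≤ quadRoot A B C := by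
  rw [quadRoot, le_div_iff₀ (by positivity)]
  have : 2 * A * x - B ≤ √(B ^ 2 + 4 * A * C) :=
    calc 2 * A * x - B ≤ |2 * A * x - B| := le_abs_self _
      _ = √((2 * A * x - B) ^ 2) := (sqrt_sq_eq_abs _).symm
      _ ≤ √(B ^ 2 + 4 * A * C) := sqrt_le_sqrt (by nlinarith)
  linarith

lemma quadRoot_lt {A B C x : ℝ} (hA : 0 < A) (hx : 0 < A * x ^ 2 - B * x - C)
    (hvertex : B < 2 * A * x) : quadRoot A B C < x := by
  rw [quadRoot, div_lt_iff₀ (by positivity)]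
  have : √(B ^ 2 + 4 * A * C) < 2 * A * x - B :=
    (sqrt_lt' (by nlinarith)).2 (by nlinarith)
  linarith

noncomputable def bernoulliLogLik (a b s : ℝ) : ℝ := a * log s + b * log (1 - s)

lemma add_mul_klBer_div_add {a b s : ℝ} (ha : 0 < a) (hb : 0 < b) (hs₀ : s ≠ 0)
    (hs₁ : 1 - s ≠ 0) :
    (a + b) * klBer (a / (a + b)) s =
      bernoulliLogLik a b (a / (a + b)) - bernoulliLogLik a b s := by
  have hab : a + b ≠ 0 := by positivity
  have hm₁ : 1 - a / (a + b) = b / (a + b) := by field_simp; ring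
  rw [klBer, bernoulliLogLik, bernoulliLogLik, hm₁, log_div (by positivity) hs₀,
    log_div (by positivity) hs₁]
  field_simp
  ring

lemma add_bernoulliLogLik_le_of_crit {a b lam s t : ℝ} (ha : 0 ≤ a) (hb : 0 ≤ b)
    (hs : s ∈ Set.Ioo 0 1) (ht : t ∈ Set.Ioo 0 1) (hcrit : lam + a / t = b / (1 - t)) :
    lam * s + bernoulliLogLik a b s ≤ lam * t + bernoulliLogLik a b t := by
  obtain ⟨hs₀, hs₁⟩ := hs
  obtain ⟨ht₀, ht₁⟩ := ht
  have h1s : 0 < 1 - s := by linarith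
  have h1t : 0 < 1 - t := by linarith
  have hlog_s : log s - log t ≤ s / t - 1 := by
    rw [← log_div hs₀.ne' ht₀.ne']; exact log_le_sub_one_of_pos (by positivity)
  have hlog_1s : log (1 - s) - log (1 - t) ≤ (1 - s) / (1 - t) - 1 := by
    rw [← log_div h1s.ne' h1t.ne']; exact log_le_sub_one_of_pos (by positivity)
  have htangent : a * (s / t - 1) + b * ((1 - s) / (1 - t) - 1) = -lam * (s - t) := by
    field_simp at hcrit ⊢
    linear_combination (s - t) * hcrit
  unfold bernoulliLogLik
  nlinarith [mul_le_mul_of_nonneg_left hlog_s ha, mul_le_mul_of_nonneg_left hlog_1s hb]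

/-- Let `a, b > 0`, `m = a/(a+b)`, and `λ > 0`. Then the supremum over
`s ∈ [m, 1)` of `(λ·(s − m) − (a+b)·kl(m, s))` is attained at
`s* = (λ − (a+b) + √((λ − (a+b))² + 4λa))/(2λ)`, which lies in `[m, 1)`. -/
theorem stmt15 (a b : ℝ) (ha : 0 < a) (hb : 0 < b) (lam : ℝ) (hlam : 0 < lam) :
    (lam - (a + b) + Real.sqrt ((lam - (a + b)) ^ 2 + 4 * lam * a)) / (2 * lam) ∈
        Set.Ico (a / (a + b)) 1 ∧
      IsMaxOn (fun s => lam * (s - a / (a + b)) - (a + b) * klBer (a / (a + b)) s)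
        (Set.Ico (a / (a + b)) 1)
        ((lam - (a + b) + Real.sqrt ((lam - (a + b)) ^ 2 + 4 * lam * a)) / (2 * lam)) := by
  change quadRoot lam (lam - (a + b)) a ∈ _ ∧ IsMaxOn _ _ (quadRoot lam (lam - (a + b)) a)
  set t := quadRoot lam (lam - (a + b)) a
  have hm₀ : 0 < a / (a + b) := by positivity
  have hm₁ : a / (a + b) < 1 := by rw [div_lt_one (by positivity)]; linarith
  have hmt : a / (a + b) ≤ t := by
    refine le_quadRoot hlam ?_
    have hcm : (a + b) * (a / (a + b)) = a := by field_simp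
    nlinarith [mul_pos hlam (mul_pos hm₀ (sub_pos.2 hm₁))]
  have ht₁ : t < 1 := quadRoot_lt hlam (by linarith) (by linarith)
  have ht : t ∈ Set.Ioo 0 1 := ⟨hm₀.trans_le hmt, ht₁⟩
  have hcrit : lam + a / t = b / (1 - t) := by
    have hroot := quadRoot_sq (B := lam - (a + b)) (C := a) hlam (by positivity)
    have : 1 - t ≠ 0 := by linarith
    field_simp [ht.1.ne']
    linear_combination -hroot
  refine ⟨⟨hmt, ht₁⟩, fun s ⟨hms, hs₁⟩ => ?_⟩
  have hs : s ∈ Set.Ioo 0 1 := ⟨hm₀.trans_le hms, hs₁⟩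
  have hmax := add_bernoulliLogLik_le_of_crit ha.le hb.le hs ht hcrit
  show lam * (s - _) - (a + b) * klBer _ s ≤ lam * (t - _) - (a + b) * klBer _ t
  rw [add_mul_klBer_div_add ha hb hs.1.ne' (by linarith [hs.2]),
    add_mul_klBer_div_add ha hb ht.1.ne' (by linarith [ht.2])]
  linarith
end

section
/- Let X have the Beta distribution with parameters a, b > 0 and mean m = a/(a+b). Then for every u ∈ [m, 1), P(X ≥ u) ≤ exp(−(a+b)·kl(m, u)). -/
open MeasureTheory
open scoped ENNReal

/-!
Write `f(x) = x^(a-1) (1-x)^(b-1)` for the Beta kernel, `B = ∫₀¹ f` for its mass and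
`P(x) = x^a (1-x)^b`, so that `P' = f·(a - (a+b)x)` and, for the mean `m`,
`exp(-(a+b)·kl(m,u)) = P(u)/P(m)`. It suffices that `P(m)·∫ᵤ¹ f ≤ B·P(u)`, which in fact holds
whenever `0 ≤ m ≤ u ≤ 1`: the difference of the two sides is `∫ᵤ¹ d` with
`d = -B·P' - P(m)·f = f·(B(a+b)x - Ba - P(m))`, which changes sign once, from negative to
positive, and whose integral over `[m,1]` is `P(m)·(B - ∫ₘ¹ f) ≥ 0`.
-/

section BetaTail

open Set Real
open ProbabilityTheory (beta beta_pos beta_eq_betaIntegralReal)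

noncomputable def betaKernel (a b x : ℝ) : ℝ := x ^ (a - 1) * (1 - x) ^ (b - 1)

variable {a b : ℝ}

lemma betaKernel_nonneg {x : ℝ} (hx : x ∈ Icc (0 : ℝ) 1) : 0 ≤ betaKernel a b x :=
  mul_nonneg (rpow_nonneg hx.1 _) (rpow_nonneg (sub_nonneg.2 hx.2) _)

lemma ofReal_betaKernel {x : ℝ} (hx : x ∈ Icc (0 : ℝ) 1) :
    ((betaKernel a b x : ℝ) : ℂ) = (x : ℂ) ^ ((a : ℂ) - 1) * (1 - (x : ℂ)) ^ ((b : ℂ) - 1) := by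
  rw [betaKernel, Complex.ofReal_mul, Complex.ofReal_cpow hx.1,
    Complex.ofReal_cpow (sub_nonneg.2 hx.2)]
  push_cast
  rfl

lemma intervalIntegrable_betaKernel (ha : 0 < a) (hb : 0 < b) :
    IntervalIntegrable (betaKernel a b) volume 0 1 := by
  refine (Complex.betaIntegral_convergent (u := a) (v := b) (by simpa) (by simpa)).norm.congr ?_
  intro x hx
  rw [uIoc_of_le zero_le_one] at hx
  have hx' : x ∈ Icc (0 : ℝ) 1 := Ioc_subset_Icc_self hx
  simp only [← ofReal_betaKernel hx', Complex.norm_real, norm_of_nonneg (betaKernel_nonneg hx')]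

lemma intervalIntegrable_betaKernel_of_le (ha : 0 < a) (hb : 0 < b) {u v : ℝ}
    (hu : 0 ≤ u) (huv : u ≤ v) (hv : v ≤ 1) :
    IntervalIntegrable (betaKernel a b) volume u v :=
  (intervalIntegrable_betaKernel ha hb).mono_set <| by
    rw [uIcc_of_le huv, uIcc_of_le zero_le_one]
    exact Icc_subset_Icc hu hv

lemma integral_betaKernel (ha : 0 < a) (hb : 0 < b) :
    ∫ x in (0 : ℝ)..1, betaKernel a b x = beta a b := by
  have hcongr : EqOn (fun x : ℝ => ((betaKernel a b x : ℝ) : ℂ))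
      (fun x : ℝ => (x : ℂ) ^ ((a : ℂ) - 1) * (1 - (x : ℂ)) ^ ((b : ℂ) - 1)) (uIcc 0 1) :=
    fun x hx => ofReal_betaKernel (by rwa [uIcc_of_le zero_le_one] at hx)
  rw [beta_eq_betaIntegralReal a b ha hb, Complex.betaIntegral,
    ← intervalIntegral.integral_congr hcongr, intervalIntegral.integral_ofReal, Complex.ofReal_re]

lemma integral_betaKernel_le_beta (ha : 0 < a) (hb : 0 < b) {u : ℝ} (hu0 : 0 ≤ u)
    (hu1 : u ≤ 1) :
    ∫ x in u..1, betaKernel a b x ≤ beta a b := by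
  have hinit : 0 ≤ ∫ x in (0 : ℝ)..u, betaKernel a b x :=
    intervalIntegral.integral_nonneg hu0 fun x hx => betaKernel_nonneg ⟨hx.1, hx.2.trans hu1⟩
  rw [← integral_betaKernel ha hb, ← intervalIntegral.integral_interval_sub_left
    (intervalIntegrable_betaKernel ha hb)
    (intervalIntegrable_betaKernel_of_le ha hb le_rfl hu0 hu1)]
  linarith

lemma hasDerivAt_rpow_mul_one_sub_rpow {x : ℝ} (hx : x ∈ Ioo (0 : ℝ) 1) :
    HasDerivAt (fun y => y ^ a * (1 - y) ^ b) (betaKernel a b x * (a - (a + b) * x)) x := by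
  have hx0 : x ≠ 0 := hx.1.ne'
  have hx1 : 1 - x ≠ 0 := sub_ne_zero.2 hx.2.ne'
  have hderiv : HasDerivAt (fun y => y ^ a * (1 - y) ^ b)
      (1 * a * x ^ (a - 1) * (1 - x) ^ b + x ^ a * (-1 * b * (1 - x) ^ (b - 1))) x :=
    ((hasDerivAt_id' x).rpow_const (Or.inl hx0)).mul
      (((hasDerivAt_id' x).const_sub 1).rpow_const (Or.inl hx1))
  refine hderiv.congr_deriv ?_
  have hxa : x ^ a = x ^ (a - 1) * x := by rw [← rpow_add_one hx0, sub_add_cancel]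
  have hxb : (1 - x) ^ b = (1 - x) ^ (b - 1) * (1 - x) := by
    rw [← rpow_add_one hx1, sub_add_cancel]
  rw [betaKernel, hxa, hxb]
  ring

lemma integral_betaKernel_mul_eq_sub (ha : 0 < a) (hb : 0 < b) {u v : ℝ}
    (hu : 0 ≤ u) (huv : u ≤ v) (hv : v ≤ 1) :
    ∫ x in u..v, betaKernel a b x * (a - (a + b) * x)
      = v ^ a * (1 - v) ^ b - u ^ a * (1 - u) ^ b := by
  apply intervalIntegral.integral_eq_sub_of_hasDerivAt_of_le huv
  · exact ((continuous_rpow_const ha.le).mul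
      ((continuous_rpow_const hb.le).comp (continuous_sub_left 1))).continuousOn
  · exact fun x hx => hasDerivAt_rpow_mul_one_sub_rpow ⟨hu.trans_lt hx.1, hx.2.trans_le hv⟩
  · exact (intervalIntegrable_betaKernel_of_le ha hb hu huv hv).mul_continuousOn (by fun_prop)

lemma integral_betaKernel_mul_tail (ha : 0 < a) (hb : 0 < b) {u : ℝ} (hu0 : 0 ≤ u)
    (hu1 : u ≤ 1) :
    ∫ x in u..1, betaKernel a b x * ((a + b) * x - a) = u ^ a * (1 - u) ^ b := by
  have hneg (x : ℝ) :
      betaKernel a b x * ((a + b) * x - a) = -(betaKernel a b x * (a - (a + b) * x)) := by ring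
  simp only [hneg, intervalIntegral.integral_neg,
    integral_betaKernel_mul_eq_sub ha hb hu0 hu1 le_rfl, sub_self, zero_rpow hb.ne', mul_zero,
    zero_sub, neg_neg]

lemma integral_nonneg_of_sign_change {d : ℝ → ℝ} {m t u v : ℝ} (hmu : m ≤ u) (huv : u ≤ v)
    (hd : IntervalIntegrable d volume m v)
    (hneg : ∀ x ∈ Icc m v, x ≤ t → d x ≤ 0) (hpos : ∀ x ∈ Icc m v, t ≤ x → 0 ≤ d x)
    (htot : 0 ≤ ∫ x in m..v, d x) :
    0 ≤ ∫ x in u..v, d x := by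
  rcases le_or_gt t u with htu | hut
  · exact intervalIntegral.integral_nonneg huv fun x hx =>
      hpos x ⟨hmu.trans hx.1, hx.2⟩ (htu.trans hx.1)
  · have hinit : 0 ≤ ∫ x in m..u, -d x := intervalIntegral.integral_nonneg hmu fun x hx =>
      neg_nonneg.2 (hneg x ⟨hx.1, hx.2.trans huv⟩ (hx.2.trans hut.le))
    rw [intervalIntegral.integral_neg] at hinit
    rw [← intervalIntegral.integral_interval_sub_left hd (hd.mono_set (by
      rw [uIcc_of_le hmu, uIcc_of_le (hmu.trans huv)]
      exact Icc_subset_Icc le_rfl huv))]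
    linarith

lemma mul_integral_betaKernel_le (ha : 0 < a) (hb : 0 < b) {m u : ℝ} (hm0 : 0 ≤ m)
    (hmu : m ≤ u) (hu1 : u ≤ 1) :
    m ^ a * (1 - m) ^ b * ∫ x in u..1, betaKernel a b x ≤ beta a b * (u ^ a * (1 - u) ^ b) := by
  set B := beta a b
  set C := m ^ a * (1 - m) ^ b
  have hm1 : m ≤ 1 := hmu.trans hu1
  have hab : 0 < a + b := add_pos ha hb
  have hB : 0 < B := beta_pos ha hb
  have hC : 0 ≤ C := mul_nonneg (rpow_nonneg hm0 a) (rpow_nonneg (sub_nonneg.2 hm1) b)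
  let d x := B * (betaKernel a b x * ((a + b) * x - a)) - C * betaKernel a b x
  have hk_int (w : ℝ) (hw0 : 0 ≤ w) (hw1 : w ≤ 1) :=
    intervalIntegrable_betaKernel_of_le ha hb hw0 hw1 le_rfl
  have hd_integral (w : ℝ) (hw0 : 0 ≤ w) (hw1 : w ≤ 1) :
      ∫ x in w..1, d x = B * (w ^ a * (1 - w) ^ b) - C * ∫ x in w..1, betaKernel a b x := by
    rw [intervalIntegral.integral_sub
      (((hk_int w hw0 hw1).mul_continuousOn (by fun_prop)).const_mul _)
      ((hk_int w hw0 hw1).const_mul _), intervalIntegral.integral_const_mul,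
      intervalIntegral.integral_const_mul, integral_betaKernel_mul_tail ha hb hw0 hw1]
  have htot : 0 ≤ ∫ x in m..1, d x := by
    rw [hd_integral m hm0 hm1, mul_comm B C, ← mul_sub]
    exact mul_nonneg hC (sub_nonneg.2 (integral_betaKernel_le_beta ha hb hm0 hm1))
  set t := (a + C / B) / (a + b)
  have hd_factor (x : ℝ) : d x = betaKernel a b x * (B * (a + b) * (x - t)) := by
    simp only [d, t]
    field_simp
    ring
  have hk (x : ℝ) (hx : x ∈ Icc m 1) : 0 ≤ betaKernel a b x :=
    betaKernel_nonneg ⟨hm0.trans hx.1, hx.2⟩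
  have hBab : 0 ≤ B * (a + b) := (mul_pos hB hab).le
  have htail := integral_nonneg_of_sign_change (d := d) (t := t) hmu hu1
    ((((hk_int m hm0 hm1).mul_continuousOn (by fun_prop)).const_mul _).sub
      ((hk_int m hm0 hm1).const_mul _))
    (fun x hx hxt => (hd_factor x).symm ▸ mul_nonpos_of_nonneg_of_nonpos (hk x hx)
      (mul_nonpos_of_nonneg_of_nonpos hBab (sub_nonpos.2 hxt)))
    (fun x hx htx => (hd_factor x).symm ▸
      mul_nonneg (hk x hx) (mul_nonneg hBab (sub_nonneg.2 htx)))
    htot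
  rw [hd_integral u (hm0.trans hmu) hu1] at htail
  linarith

lemma betaMeasure_setOf_le (ha : 0 < a) (hb : 0 < b) {u : ℝ} (hu0 : 0 ≤ u) (hu1 : u ≤ 1) :
    betaMeasure a b {x | u ≤ x} = ENNReal.ofReal ((∫ x in u..1, betaKernel a b x) / beta a b) := by
  have hset : Ici u ∩ Icc 0 1 = Icc u 1 := by
    ext x
    simp only [mem_inter_iff, mem_Ici, mem_Icc]
    exact ⟨fun h => ⟨h.1, h.2.2⟩, fun h => ⟨h.1, hu0.trans h.1, h.2⟩⟩
  have hk := intervalIntegrable_betaKernel_of_le ha hb hu0 hu1 le_rfl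
  rw [intervalIntegrable_iff_integrableOn_Ioc_of_le hu1] at hk
  change betaMeasure a b (Ici u) = _
  rw [betaMeasure, withDensity_apply _ measurableSet_Ici,
    Measure.restrict_restrict measurableSet_Ici, hset,
    Measure.restrict_congr_set Ioc_ae_eq_Icc.symm, intervalIntegral.integral_of_le hu1,
    ← integral_div, ofReal_integral_eq_lintegral_ofReal (hk.div_const _)]
  · rfl
  · exact ae_restrict_of_forall_mem measurableSet_Ioc fun x hx =>
      div_nonneg (betaKernel_nonneg ⟨hu0.trans hx.1.le, hx.2⟩) (beta_pos ha hb).le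

lemma exp_neg_mul_klBer {n p q : ℝ} (hp0 : 0 < p) (hp1 : p < 1) (hq0 : 0 < q) (hq1 : q < 1) :
    exp (-n * klBer p q) = (q / p) ^ (n * p) * ((1 - q) / (1 - p)) ^ (n * (1 - p)) := by
  rw [rpow_def_of_pos (div_pos hq0 hp0), rpow_def_of_pos (div_pos (sub_pos.2 hq1) (sub_pos.2 hp1)),
    ← exp_add, klBer, ← inv_div p, ← inv_div (1 - p), log_inv, log_inv]
  ring_nf

end BetaTail

/-- Let `X` have the Beta distribution with parameters `a, b > 0` and mean
`m = a/(a+b)`. Then for every `u ∈ [m, 1)`, `P(X ≥ u) ≤ exp(−(a+b)·kl(m, u))`. -/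
theorem stmt17 (a b : ℝ) (ha : 0 < a) (hb : 0 < b) (u : ℝ)
    (hu : u ∈ Set.Ico (a / (a + b)) 1) :
    betaMeasure a b {x | u ≤ x} ≤
      ENNReal.ofReal (Real.exp (-(a + b) * klBer (a / (a + b)) u)) := by
  obtain ⟨hmu, hu1⟩ := hu
  have hab : 0 < a + b := add_pos ha hb
  have hm0 : 0 < a / (a + b) := div_pos ha hab
  have hm1 : 0 < 1 - a / (a + b) := sub_pos.2 ((div_lt_one hab).2 (by linarith))
  have hu0 : 0 < u := hm0.trans_le hmu
  rw [betaMeasure_setOf_le ha hb hu0.le hu1.le, exp_neg_mul_klBer hm0 (sub_pos.1 hm1) hu0 hu1,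
    show (a + b) * (a / (a + b)) = a by field_simp,
    show (a + b) * (1 - a / (a + b)) = b by field_simp; ring,
    Real.div_rpow hu0.le hm0.le, Real.div_rpow (sub_pos.2 hu1).le hm1.le, div_mul_div_comm]
  refine ENNReal.ofReal_le_ofReal ((div_le_div_iff₀ (ProbabilityTheory.beta_pos ha hb)
    (mul_pos (Real.rpow_pos_of_pos hm0 a) (Real.rpow_pos_of_pos hm1 b))).2 ?_)
  linarith [mul_integral_betaKernel_le ha hb hm0.le hmu hu1.le]
end
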